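/- Let Λ = Λ(m,λ) and let Γ be the quotient of Λ by the two-sided ideal generated by the arrows δ, ν, ε, ρ. Then Γ is isomorphic to the bound quiver algebra on the quiver with vertices 1,...,6 and arrows α:3→1, σ:3→2, ξ:5→3, η:5→4, γ:4→1, β:4→2, ω:6→4, μ:6→3, subject to the relations ωβ = μσ, ηγ = ξα, μα = ωγ, ξσ = ηβ. -/

import Mathlib

open scoped TensorProduct

namespace HigherTetrahedral

/-- The twelve arrows of the tetrahedral triangulation quiver. -/
inductive Arr : Type
  | nu | de | ep | rh | si | al | ga | be | xi | et | om | mu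
  deriving DecidableEq

instance instFintypeArr : Fintype Arr :=
  Fintype.ofList [.nu, .de, .ep, .rh, .si, .al, .ga, .be, .xi, .et, .om, .mu]
    (by intro x; cases x <;> simp)

open Arr

/-- Source vertex of each arrow (vertex `v` is `⟨v-1⟩ : Fin 6`). -/
def src : Arr → Fin 6
  | nu => 0 | de => 0 | ep => 1 | rh => 1 | si => 2 | al => 2
  | ga => 3 | be => 3 | xi => 4 | et => 4 | om => 5 | mu => 5

/-- Target vertex of each arrow. -/
def tgt : Arr → Fin 6
  | nu => 5 | de => 4 | ep => 4 | rh => 5 | si => 1 | al => 0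
  | ga => 0 | be => 1 | xi => 2 | et => 3 | om => 3 | mu => 2

/-- The permutation `f` of arrows, with orbits (δ η γ), (ε ξ σ), (ρ ω β), (ν μ α). -/
def f : Arr → Arr
  | de => et | et => ga | ga => de
  | ep => xi | xi => si | si => ep
  | rh => om | om => be | be => rh
  | nu => mu | mu => al | al => nu

/-- The permutation `g`: `g θ` is the arrow starting at `tgt θ` other than `f θ`. -/
def g : Arr → Arr
  | de => xi | et => be | ga => nu
  | ep => et | xi => al | si => rh
  | rh => mu | om => ga | be => ep
  | nu => om | mu => si | al => de

variable (K : Type) [Field K]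

/-- The ambient free algebra on the vertices and arrows. -/
abbrev FreeTet := FreeAlgebra K ((Fin 6) ⊕ Arr)

/-- Generator corresponding to a vertex. -/
def V (i : Fin 6) : FreeTet K := FreeAlgebra.ι K (Sum.inl i)

/-- Generator corresponding to an arrow. -/
def A (θ : Arr) : FreeTet K := FreeAlgebra.ι K (Sum.inr θ)

variable (m : ℕ) (lam : K)

/-- The defining relations of the higher tetrahedral algebra `Λ(m,λ)`, together with
the path-algebra relations for the vertex idempotents. -/
inductive TetRel : FreeTet K → FreeTet K → Prop
  | idem (i j : Fin 6) : TetRel (V K i * V K j) (if i = j then V K i else 0)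
  | sum_one : TetRel (∑ i : Fin 6, V K i) 1
  | src_tgt (θ : Arr) : TetRel (V K (src θ) * A K θ * V K (tgt θ)) (A K θ)
  | rel_ga : TetRel (A K ga * A K de)
      (A K be * A K ep + lam • ((A K be * A K rh * A K om) ^ (m - 1) * (A K be * A K ep)))
  | rel_rh : TetRel (A K rh * A K om)
      (A K ep * A K et + lam • ((A K ep * A K xi * A K si) ^ (m - 1) * (A K ep * A K et)))
  | rel_xi : TetRel (A K xi * A K si)
      (A K et * A K be + lam • ((A K et * A K ga * A K de) ^ (m - 1) * (A K et * A K be)))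
  | rel_de : TetRel (A K de * A K et) (A K nu * A K om)
  | rel_om : TetRel (A K om * A K be) (A K mu * A K si)
  | rel_si : TetRel (A K si * A K ep) (A K al * A K de)
  | rel_et : TetRel (A K et * A K ga) (A K xi * A K al)
  | rel_be : TetRel (A K be * A K rh) (A K ga * A K nu)
  | rel_ep : TetRel (A K ep * A K xi) (A K rh * A K mu)
  | rel_nu : TetRel (A K nu * A K mu) (A K de * A K xi)
  | rel_mu : TetRel (A K mu * A K al) (A K om * A K ga)
  | rel_al : TetRel (A K al * A K nu) (A K si * A K rh)
  | zero_rel (θ : Arr) : TetRel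
      ((A K θ * A K (f θ) * A K (f (f θ))) ^ (m - 1) * (A K θ * A K (f θ)) * A K (g (f θ))) 0

/-- The higher tetrahedral algebra `Λ(m,λ)`. -/
abbrev Tet := RingQuot (TetRel K m lam)

/-- The idempotent of `Λ(m,λ)` at a vertex. -/
def e (i : Fin 6) : Tet K m lam := RingQuot.mkAlgHom K (TetRel K m lam) (V K i)

/-- The image in `Λ(m,λ)` of an arrow. -/
def a (θ : Arr) : Tet K m lam := RingQuot.mkAlgHom K (TetRel K m lam) (A K θ)

/-- The elements `X_i` (vertex `i+1` in the paper's numbering):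
`X₁ = δηγ`, `X₂ = ρωβ`, `X₃ = ανμ`, `X₄ = γδη`, `X₅ = ηγδ`, `X₆ = ωβρ`. -/
def X : Fin 6 → Tet K m lam
  | 0 => a K m lam de * a K m lam et * a K m lam ga
  | 1 => a K m lam rh * a K m lam om * a K m lam be
  | 2 => a K m lam al * a K m lam nu * a K m lam mu
  | 3 => a K m lam ga * a K m lam de * a K m lam et
  | 4 => a K m lam et * a K m lam ga * a K m lam de
  | 5 => a K m lam om * a K m lam be * a K m lam rh

/-- Product in `Λ(m,λ)` of a list of arrows (a path, read left to right). -/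
def pathProd (l : List Arr) : Tet K m lam := (l.map (a K m lam)).prod

/-- `IsPath i j l` : the list of arrows `l` is a (composable) path from vertex `i`
to vertex `j`. -/
def IsPath (i j : Fin 6) (l : List Arr) : Prop :=
  l ≠ [] ∧ l.Chain' (fun x y => tgt x = src y) ∧
    (∀ h : l ≠ [], src (l.head h) = i ∧ tgt (l.getLast h) = j)

end HigherTetrahedral


namespace HigherTetrahedral

variable (K : Type) [Field K] (m : ℕ) (lam : K)

open Arr in
/-- The relations killing the arrows `δ, ν, ε, ρ` of `Λ(m,λ)`. -/
inductive KillRel : Tet K m lam → Tet K m lam → Prop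
  | kill_de : KillRel (a K m lam de) 0
  | kill_nu : KillRel (a K m lam nu) 0
  | kill_ep : KillRel (a K m lam ep) 0
  | kill_rh : KillRel (a K m lam rh) 0

/-- The quotient `Γ` of `Λ(m,λ)` by the two-sided ideal generated by `δ, ν, ε, ρ`. -/
abbrev Gam := RingQuot (KillRel K m lam)

/-- The canonical projection `Λ(m,λ) → Γ`. -/
def gproj : Tet K m lam →ₐ[K] Gam K m lam := RingQuot.mkAlgHom K (KillRel K m lam)

/-- The eight arrows of the quiver of the algebra `Γ'`:
`α:3→1, σ:3→2, ξ:5→3, η:5→4, γ:4→1, β:4→2, ω:6→4, μ:6→3`. -/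
inductive GArr : Type
  | al' | si' | xi' | et' | ga' | be' | om' | mu'
  deriving DecidableEq

open GArr

/-- Source of an arrow of `Γ'`. -/
def gsrc : GArr → Fin 6
  | al' => 2 | si' => 2 | xi' => 4 | et' => 4 | ga' => 3 | be' => 3 | om' => 5 | mu' => 5

/-- Target of an arrow of `Γ'`. -/
def gtgt : GArr → Fin 6
  | al' => 0 | si' => 1 | xi' => 2 | et' => 3 | ga' => 0 | be' => 1 | om' => 3 | mu' => 2

/-- Free algebra on the vertices and arrows of `Γ'`. -/
abbrev FreeGam := FreeAlgebra K ((Fin 6) ⊕ GArr)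

/-- Vertex generator of `Γ'`. -/
def GV (i : Fin 6) : FreeGam K := FreeAlgebra.ι K (Sum.inl i)

/-- Arrow generator of `Γ'`. -/
def GA (θ : GArr) : FreeGam K := FreeAlgebra.ι K (Sum.inr θ)

/-- The defining relations of `Γ'`: the path-algebra relations together with
`ωβ = μσ`, `ηγ = ξα`, `μα = ωγ`, `ξσ = ηβ`. -/
inductive GamRel : FreeGam K → FreeGam K → Prop
  | idem (i j : Fin 6) : GamRel (GV K i * GV K j) (if i = j then GV K i else 0)
  | sum_one : GamRel (∑ i : Fin 6, GV K i) 1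
  | src_tgt (θ : GArr) : GamRel (GV K (gsrc θ) * GA K θ * GV K (gtgt θ)) (GA K θ)
  | rel_om : GamRel (GA K om' * GA K be') (GA K mu' * GA K si')
  | rel_et : GamRel (GA K et' * GA K ga') (GA K xi' * GA K al')
  | rel_mu : GamRel (GA K mu' * GA K al') (GA K om' * GA K ga')
  | rel_xi : GamRel (GA K xi' * GA K si') (GA K et' * GA K be')

/-- The bound quiver algebra `Γ'`. -/
abbrev Gam' := RingQuot (GamRel K)

/-- Vertex idempotent of `Γ'`. -/
def ge (i : Fin 6) : Gam' K := RingQuot.mkAlgHom K (GamRel K) (GV K i)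

/-- Arrow of `Γ'`. -/
def ga'' (θ : GArr) : Gam' K := RingQuot.mkAlgHom K (GamRel K) (GA K θ)

end HigherTetrahedral

/-!
Killing `δ, ν, ε, ρ` leaves exactly the arrows of `Γ'`, so it suffices to compare relations.
The commutativity relations of `Λ` either contain a killed arrow on both sides or are the four
relations of `Γ'`. Every deformation term and every zero relation contains a factor
`(θ f(θ) f²(θ))^(m-1)` with `m - 1 ≥ 1`, and each `f`-orbit contains a killed arrow, so all of
them vanish in `Γ`: `γδ = βε` and `ρω = εη` become `0 = 0`, and
`ξσ = ηβ + λ(ηγδ)^(m-1)ηβ` becomes `ξσ = ηβ`. Hence the two algebra maps defined on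
generators are well defined, and they are mutually inverse.
-/

namespace HigherTetrahedral

open Arr GArr

variable (K : Type) [Field K] (m : ℕ) (lam : K)

section Gam'Relations

lemma ge_mul_ge (i j : Fin 6) : ge K i * ge K j = if i = j then ge K i else 0 := by
  simpa [ge, apply_ite (RingQuot.mkAlgHom K (GamRel K))] using
    RingQuot.mkAlgHom_rel K (GamRel.idem (K := K) i j)

lemma sum_ge : ∑ i : Fin 6, ge K i = 1 := by
  simpa [ge] using RingQuot.mkAlgHom_rel K (GamRel.sum_one (K := K))

lemma ge_mul_ga_mul_ge (θ : GArr) : ge K (gsrc θ) * ga'' K θ * ge K (gtgt θ) = ga'' K θ := by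
  simpa [ge, ga''] using RingQuot.mkAlgHom_rel K (GamRel.src_tgt (K := K) θ)

lemma ga_om_mul_ga_be : ga'' K om' * ga'' K be' = ga'' K mu' * ga'' K si' := by
  simpa [ga''] using RingQuot.mkAlgHom_rel K (GamRel.rel_om (K := K))

lemma ga_et_mul_ga_ga : ga'' K et' * ga'' K ga' = ga'' K xi' * ga'' K al' := by
  simpa [ga''] using RingQuot.mkAlgHom_rel K (GamRel.rel_et (K := K))

lemma ga_mu_mul_ga_al : ga'' K mu' * ga'' K al' = ga'' K om' * ga'' K ga' := by
  simpa [ga''] using RingQuot.mkAlgHom_rel K (GamRel.rel_mu (K := K))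

lemma ga_xi_mul_ga_si : ga'' K xi' * ga'' K si' = ga'' K et' * ga'' K be' := by
  simpa [ga''] using RingQuot.mkAlgHom_rel K (GamRel.rel_xi (K := K))

end Gam'Relations

section TetRelations

lemma e_mul_e (i j : Fin 6) : e K m lam i * e K m lam j = if i = j then e K m lam i else 0 := by
  simpa [e, apply_ite (RingQuot.mkAlgHom K (TetRel K m lam))] using
    RingQuot.mkAlgHom_rel K (TetRel.idem (K := K) (m := m) (lam := lam) i j)

lemma sum_e : ∑ i : Fin 6, e K m lam i = 1 := by
  simpa [e] using RingQuot.mkAlgHom_rel K (TetRel.sum_one (K := K) (m := m) (lam := lam))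

lemma e_mul_a_mul_e (θ : Arr) :
    e K m lam (src θ) * a K m lam θ * e K m lam (tgt θ) = a K m lam θ := by
  simpa [e, a] using RingQuot.mkAlgHom_rel K (TetRel.src_tgt (K := K) (m := m) (lam := lam) θ)

lemma a_om_mul_a_be : a K m lam om * a K m lam be = a K m lam mu * a K m lam si := by
  simpa [a] using RingQuot.mkAlgHom_rel K (TetRel.rel_om (K := K) (m := m) (lam := lam))

lemma a_et_mul_a_ga : a K m lam et * a K m lam ga = a K m lam xi * a K m lam al := by
  simpa [a] using RingQuot.mkAlgHom_rel K (TetRel.rel_et (K := K) (m := m) (lam := lam))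

lemma a_mu_mul_a_al : a K m lam mu * a K m lam al = a K m lam om * a K m lam ga := by
  simpa [a] using RingQuot.mkAlgHom_rel K (TetRel.rel_mu (K := K) (m := m) (lam := lam))

lemma a_xi_mul_a_si :
    a K m lam xi * a K m lam si = a K m lam et * a K m lam be +
      lam • ((a K m lam et * a K m lam ga * a K m lam de) ^ (m - 1) *
        (a K m lam et * a K m lam be)) := by
  simpa [a] using RingQuot.mkAlgHom_rel K (TetRel.rel_xi (K := K) (m := m) (lam := lam))

end TetRelations

section GamKilled

@[simp] lemma gproj_a_de : gproj K m lam (a K m lam de) = 0 :=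
  (RingQuot.mkAlgHom_rel K KillRel.kill_de).trans (map_zero _)

@[simp] lemma gproj_a_nu : gproj K m lam (a K m lam nu) = 0 :=
  (RingQuot.mkAlgHom_rel K KillRel.kill_nu).trans (map_zero _)

@[simp] lemma gproj_a_ep : gproj K m lam (a K m lam ep) = 0 :=
  (RingQuot.mkAlgHom_rel K KillRel.kill_ep).trans (map_zero _)

@[simp] lemma gproj_a_rh : gproj K m lam (a K m lam rh) = 0 :=
  (RingQuot.mkAlgHom_rel K KillRel.kill_rh).trans (map_zero _)

end GamKilled

section ToGam'

variable {m}

def arrowImage : Arr → Gam' K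
  | de => 0 | nu => 0 | ep => 0 | rh => 0
  | si => ga'' K si' | al => ga'' K al' | Arr.ga => ga'' K ga' | be => ga'' K be'
  | xi => ga'' K xi' | et => ga'' K et' | om => ga'' K om' | mu => ga'' K mu'

def freeTetToGam' : FreeTet K →ₐ[K] Gam' K :=
  FreeAlgebra.lift K (Sum.elim (ge K) (arrowImage K))

@[simp] lemma freeTetToGam'_V (i : Fin 6) : freeTetToGam' K (V K i) = ge K i :=
  FreeAlgebra.lift_ι_apply _ _

@[simp] lemma freeTetToGam'_A (θ : Arr) : freeTetToGam' K (A K θ) = arrowImage K θ :=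
  FreeAlgebra.lift_ι_apply _ _

lemma freeTetToGam'_respects_tetRel (hm : 2 ≤ m) ⦃x y : FreeTet K⦄ (h : TetRel K m lam x y) :
    freeTetToGam' K x = freeTetToGam' K y := by
  have hm1 : m - 1 ≠ 0 := by omega
  cases h with
  | idem i j => simp [ge_mul_ge, apply_ite (freeTetToGam' K)]
  | sum_one => simp [sum_ge]
  | src_tgt θ =>
    cases θ <;> simp [arrowImage]
    exacts [ge_mul_ga_mul_ge K si', ge_mul_ga_mul_ge K al', ge_mul_ga_mul_ge K ga',
      ge_mul_ga_mul_ge K be', ge_mul_ga_mul_ge K xi', ge_mul_ga_mul_ge K et',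
      ge_mul_ga_mul_ge K om', ge_mul_ga_mul_ge K mu']
  | zero_rel θ => cases θ <;> simp [arrowImage, f, g, zero_pow hm1]
  | _ =>
    simp [arrowImage, zero_pow hm1, ga_om_mul_ga_be, ga_et_mul_ga_ga, ga_mu_mul_ga_al,
      ga_xi_mul_ga_si]

def tetToGam' (hm : 2 ≤ m) : Tet K m lam →ₐ[K] Gam' K :=
  RingQuot.liftAlgHom K ⟨freeTetToGam' K, freeTetToGam'_respects_tetRel K lam hm⟩

def gamToGam' (hm : 2 ≤ m) : Gam K m lam →ₐ[K] Gam' K :=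
  RingQuot.liftAlgHom K ⟨tetToGam' K lam hm, fun _ _ h => by
    cases h <;> simp [tetToGam', a, arrowImage]⟩

@[simp] lemma gamToGam'_gproj_e (hm : 2 ≤ m) (i : Fin 6) :
    gamToGam' K lam hm (gproj K m lam (e K m lam i)) = ge K i := by
  simp [gamToGam', gproj, tetToGam', e]

@[simp] lemma gamToGam'_gproj_a (hm : 2 ≤ m) (θ : Arr) :
    gamToGam' K lam hm (gproj K m lam (a K m lam θ)) = arrowImage K θ := by
  simp [gamToGam', gproj, tetToGam', a]

end ToGam'

section ToGam

def GArr.toArr : GArr → Arr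
  | al' => al | si' => si | xi' => xi | et' => et
  | ga' => Arr.ga | be' => be | om' => om | mu' => mu

@[simp] lemma src_toArr (θ : GArr) : src θ.toArr = gsrc θ := by cases θ <;> rfl

@[simp] lemma tgt_toArr (θ : GArr) : tgt θ.toArr = gtgt θ := by cases θ <;> rfl

@[simp] lemma arrowImage_toArr (θ : GArr) : arrowImage K θ.toArr = ga'' K θ := by cases θ <;> rfl

def freeGamToGam : FreeGam K →ₐ[K] Gam K m lam :=
  FreeAlgebra.lift K (Sum.elim (fun i => gproj K m lam (e K m lam i))
    (fun θ => gproj K m lam (a K m lam θ.toArr)))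

@[simp] lemma freeGamToGam_GV (i : Fin 6) :
    freeGamToGam K m lam (GV K i) = gproj K m lam (e K m lam i) :=
  FreeAlgebra.lift_ι_apply _ _

@[simp] lemma freeGamToGam_GA (θ : GArr) :
    freeGamToGam K m lam (GA K θ) = gproj K m lam (a K m lam θ.toArr) :=
  FreeAlgebra.lift_ι_apply _ _

variable {m}

lemma freeGamToGam_respects_gamRel (hm : 2 ≤ m) ⦃x y : FreeGam K⦄ (h : GamRel K x y) :
    freeGamToGam K m lam x = freeGamToGam K m lam y := by
  have hm1 : m - 1 ≠ 0 := by omega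
  cases h with
  | idem i j =>
    simpa [apply_ite (freeGamToGam K m lam), apply_ite (gproj K m lam)] using
      congrArg (gproj K m lam) (e_mul_e K m lam i j)
  | sum_one => simpa using congrArg (gproj K m lam) (sum_e K m lam)
  | src_tgt θ => simpa using congrArg (gproj K m lam) (e_mul_a_mul_e K m lam θ.toArr)
  | rel_om => simpa [GArr.toArr] using congrArg (gproj K m lam) (a_om_mul_a_be K m lam)
  | rel_et => simpa [GArr.toArr] using congrArg (gproj K m lam) (a_et_mul_a_ga K m lam)
  | rel_mu => simpa [GArr.toArr] using congrArg (gproj K m lam) (a_mu_mul_a_al K m lam)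
  | rel_xi =>
    simpa [GArr.toArr, zero_pow hm1] using congrArg (gproj K m lam) (a_xi_mul_a_si K m lam)

def gam'ToGam (hm : 2 ≤ m) : Gam' K →ₐ[K] Gam K m lam :=
  RingQuot.liftAlgHom K ⟨freeGamToGam K m lam, freeGamToGam_respects_gamRel K lam hm⟩

@[simp] lemma gam'ToGam_ge (hm : 2 ≤ m) (i : Fin 6) :
    gam'ToGam K lam hm (ge K i) = gproj K m lam (e K m lam i) := by
  simp [gam'ToGam, ge]

@[simp] lemma gam'ToGam_ga (hm : 2 ≤ m) (θ : GArr) :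
    gam'ToGam K lam hm (ga'' K θ) = gproj K m lam (a K m lam θ.toArr) := by
  simp [gam'ToGam, ga'']

end ToGam

section Ext

variable {K m lam} {B : Type} [Semiring B] [Algebra K B]

lemma gam'_algHom_ext {F G : Gam' K →ₐ[K] B} (he : ∀ i, F (ge K i) = G (ge K i))
    (ha : ∀ θ, F (ga'' K θ) = G (ga'' K θ)) : F = G := by
  ext (i | θ)
  exacts [he i, ha θ]

lemma gam_algHom_ext {F G : Gam K m lam →ₐ[K] B}
    (he : ∀ i, F (gproj K m lam (e K m lam i)) = G (gproj K m lam (e K m lam i)))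
    (ha : ∀ θ, F (gproj K m lam (a K m lam θ)) = G (gproj K m lam (a K m lam θ))) : F = G := by
  ext (i | θ)
  exacts [he i, ha θ]

end Ext

variable {m} in
def gamEquivGam' (hm : 2 ≤ m) : Gam K m lam ≃ₐ[K] Gam' K :=
  AlgEquiv.ofAlgHom (gamToGam' K lam hm) (gam'ToGam K lam hm)
    (gam'_algHom_ext (by simp) (by simp))
    (gam_algHom_ext (by simp) (fun θ => by cases θ <;> simp [arrowImage, GArr.toArr]))

end HigherTetrahedral

open HigherTetrahedral Arr GArr in
/-- The quotient `Γ` of `Λ(m,λ)` by the ideal generated by the arrows `δ, ν, ε, ρ` is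
isomorphic to the bound quiver algebra `Γ'` given by the quiver with arrows
`α:3→1, σ:3→2, ξ:5→3, η:5→4, γ:4→1, β:4→2, ω:6→4, μ:6→3` and the relations
`ωβ = μσ`, `ηγ = ξα`, `μα = ωγ`, `ξσ = ηβ`. -/
theorem gam_iso (K : Type) [Field K] (m : ℕ) (hm : 2 ≤ m) (lam : K) :
    ∃ φ : Gam K m lam ≃ₐ[K] Gam' K,
      (∀ i : Fin 6, φ (gproj K m lam (e K m lam i)) = ge K i) ∧
      φ (gproj K m lam (a K m lam al)) = ga'' K al' ∧
      φ (gproj K m lam (a K m lam si)) = ga'' K si' ∧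
      φ (gproj K m lam (a K m lam xi)) = ga'' K xi' ∧
      φ (gproj K m lam (a K m lam et)) = ga'' K et' ∧
      φ (gproj K m lam (a K m lam ga)) = ga'' K ga' ∧
      φ (gproj K m lam (a K m lam be)) = ga'' K be' ∧
      φ (gproj K m lam (a K m lam om)) = ga'' K om' ∧
      φ (gproj K m lam (a K m lam mu)) = ga'' K mu' := by
  refine ⟨gamEquivGam' K lam hm, fun i => ?_, ?_, ?_, ?_, ?_, ?_, ?_, ?_, ?_⟩ <;>
    simp [gamEquivGam', arrowImage]
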